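/- arXiv:2306.04838 — 9 statements merged into one kernel-verified Lean document; each statement's English description precedes it below -/
import Mathlib

section
/- Let g, h ∈ F₂[x] with 2·deg g < deg h and deg h odd. Then for every f ∈ F₂[x], deg h ≤ deg(h + f·g + f²). -/
open Polynomial

/-- Type 1 minimal representatives: if `2·deg g < deg h` with `deg h` odd, then
`deg h ≤ deg(h + f·g + f²)` for every `f`. -/
theorem stmt_6 (g h : Polynomial (ZMod 2))
    (hdeg : 2 * g.degree < h.degree) (hodd : Odd h.natDegree) :
    ∀ f : Polynomial (ZMod 2), h.degree ≤ (h + f * g + f ^ 2).degree := by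
  intro f
  have hh0 : h ≠ 0 := by
    intro h0
    rw [h0, degree_zero] at hdeg
    exact absurd hdeg (by simp)
  by_cases hf0 : f = 0
  · simp [hf0]
  set n := f.natDegree with hn
  set m := h.natDegree with hm
  have hdf : f.degree = (n : WithBot ℕ) := degree_eq_natDegree hf0
  have hdh : h.degree = (m : WithBot ℕ) := degree_eq_natDegree hh0
  have hdf2 : (f ^ 2).degree = ((2 * n : ℕ) : WithBot ℕ) := by
    rw [degree_pow, hdf]
    push_cast
    ring
  have hne : 2 * n ≠ m := by
    intro e
    have : Even m := e ▸ ⟨n, by ring⟩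
    exact (Nat.not_odd_iff_even.mpr this) hodd
  -- bound on deg g
  have hfg : ∀ k : ℕ, (g.natDegree + n : ℕ) ≤ k → (f * g).degree ≤ (k : WithBot ℕ) := by
    intro k hk
    rcases eq_or_ne g 0 with rfl | hg0
    · simp
    · rw [degree_mul, hdf, degree_eq_natDegree hg0]
      exact_mod_cast (show n + g.natDegree ≤ k by omega)
  have hg2 : g = 0 ∨ 2 * g.natDegree < m := by
    rcases eq_or_ne g 0 with rfl | hg0
    · exact Or.inl rfl
    · right
      rw [degree_eq_natDegree hg0, hdh] at hdeg
      exact_mod_cast (by exact_mod_cast hdeg : ((2 * g.natDegree : ℕ) : WithBot ℕ) < (m : ℕ))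
  rcases lt_or_gt_of_ne hne with hlt | hgt
  · -- small case: deg(f*g + f^2) < deg h
    have h1 : (f * g + f ^ 2).degree < h.degree := by
      apply lt_of_le_of_lt (degree_add_le _ _)
      rw [max_lt_iff, hdh, hdf2]
      constructor
      · rcases hg2 with rfl | hg2
        · simp [hdh]
        · calc (f * g).degree ≤ ((g.natDegree + n : ℕ) : WithBot ℕ) := hfg _ le_rfl
            _ < (m : WithBot ℕ) := by exact_mod_cast by omega
      · exact_mod_cast hlt
    rw [add_assoc, degree_add_eq_left_of_degree_lt h1]
  · -- big case: deg(f*g + f^2) = 2n > m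
    have hng : g = 0 ∨ g.natDegree < n := by
      rcases hg2 with rfl | hg2
      · exact Or.inl rfl
      · exact Or.inr (by omega)
    have hfg2 : (f * g).degree < (f ^ 2).degree := by
      rw [hdf2]
      rcases hng with rfl | hng
      · simp
        exact WithBot.bot_lt_coe _
      · calc (f * g).degree ≤ ((g.natDegree + n : ℕ) : WithBot ℕ) := hfg _ le_rfl
          _ < ((2 * n : ℕ) : WithBot ℕ) := by exact_mod_cast by omega
    have h2 : (f * g + f ^ 2).degree = ((2 * n : ℕ) : WithBot ℕ) := by
      rw [degree_add_eq_right_of_degree_lt hfg2, hdf2]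
    have h3 : h.degree < (f * g + f ^ 2).degree := by
      rw [h2, hdh]
      exact_mod_cast hgt
    rw [add_assoc, degree_add_eq_right_of_degree_lt h3, h2, hdh]
    exact_mod_cast hgt.le
end

section
/- Let g, h ∈ F₂[x]. If deg g ≤ deg h < 2·deg g, or if 2·deg g < deg h with deg h even and h ≠ 0, then there exists f ∈ F₂[x] with deg(h + f·g + f²) < deg h. -/
open Polynomial

lemma zmod2_eq_one : ∀ {a : ZMod 2}, a ≠ 0 → a = 1 := by decide

lemma lc_one {p : Polynomial (ZMod 2)} (hp : p ≠ 0) : p.leadingCoeff = 1 :=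
  zmod2_eq_one (leadingCoeff_ne_zero.mpr hp)

/-- Pairs `(g,h)` not of Types 1–3 are not minimal representatives: if
`deg g ≤ deg h < 2·deg g`, or `2·deg g < deg h` with `deg h` even and `h ≠ 0`, then
some `f` satisfies `deg(h + f·g + f²) < deg h`. -/
theorem stmt_9 (g h : Polynomial (ZMod 2))
    (hcase : (g.degree ≤ h.degree ∧ h.degree < 2 * g.degree) ∨
      (2 * g.degree < h.degree ∧ Even h.natDegree ∧ h ≠ 0)) :
    ∃ f : Polynomial (ZMod 2), (h + f * g + f ^ 2).degree < h.degree := by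
  rcases hcase with ⟨h1, h2⟩ | ⟨h1, h2, h3⟩
  · have hg : g ≠ 0 := by
      rintro rfl
      simp at h2
    have hh : h ≠ 0 := by
      rintro rfl
      rw [degree_zero, le_bot_iff, degree_eq_bot] at h1
      exact hg h1
    set n := h.natDegree with hn
    set m := g.natDegree with hm
    have hdh : h.degree = (n : WithBot ℕ) := degree_eq_natDegree hh
    have hdg : g.degree = (m : WithBot ℕ) := degree_eq_natDegree hg
    have hmn : m ≤ n := natDegree_le_natDegree h1
    have hn2m : n < 2 * m := by
      rw [hdh, hdg] at h2
      exact_mod_cast h2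
    refine ⟨X ^ (n - m), ?_⟩
    have hfgne : X ^ (n - m) * g ≠ 0 := mul_ne_zero (pow_ne_zero _ X_ne_zero) hg
    have hfg : (X ^ (n - m) * g).degree = (n : WithBot ℕ) := by
      rw [degree_mul, degree_X_pow, hdg, ← Nat.cast_add]
      congr 1
      omega
    have key : (h + X ^ (n - m) * g).degree < h.degree := by
      rw [← CharTwo.sub_eq_add]
      exact degree_sub_lt (by rw [hfg, hdh]) hh (by rw [lc_one hh, lc_one hfgne])
    have hsq : (((X : Polynomial (ZMod 2)) ^ (n - m)) ^ 2).degree < h.degree := by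
      rw [← pow_mul, degree_X_pow, hdh]
      exact_mod_cast (by omega : (n - m) * 2 < n)
    calc (h + X ^ (n - m) * g + (X ^ (n - m)) ^ 2).degree
        ≤ max (h + X ^ (n - m) * g).degree ((X ^ (n - m)) ^ 2).degree :=
          degree_add_le _ _
      _ < h.degree := max_lt key hsq
  · set n := h.natDegree with hn
    have hdh : h.degree = (n : WithBot ℕ) := degree_eq_natDegree h3
    obtain ⟨k, hk⟩ := h2
    have hnk : n = 2 * k := by omega
    refine ⟨X ^ k, ?_⟩
    have hsq : ((X : Polynomial (ZMod 2)) ^ k) ^ 2 = X ^ n := by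
      rw [← pow_mul, hnk, Nat.mul_comm]
    have key : (h + (X ^ k) ^ 2).degree < h.degree := by
      rw [hsq, ← CharTwo.sub_eq_add]
      refine degree_sub_lt (by rw [degree_X_pow, hdh]) h3 ?_
      rw [lc_one h3, lc_one (pow_ne_zero _ (X_ne_zero (R := ZMod 2)))]
    have hfg : ((X : Polynomial (ZMod 2)) ^ k * g).degree < h.degree := by
      rcases eq_or_ne g 0 with rfl | hg
      · rw [mul_zero, degree_zero, hdh]
        exact WithBot.bot_lt_coe n
      · have hdg : g.degree = (g.natDegree : WithBot ℕ) := degree_eq_natDegree hg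
        have h2m : 2 * g.natDegree < n := by
          rw [hdh, hdg] at h1
          exact_mod_cast h1
        rw [degree_mul, degree_X_pow, hdg, hdh, ← Nat.cast_add]
        exact_mod_cast (by omega : k + g.natDegree < n)
    calc (h + X ^ k * g + (X ^ k) ^ 2).degree
        = ((h + (X ^ k) ^ 2) + X ^ k * g).degree := by ring_nf
      _ ≤ max (h + (X ^ k) ^ 2).degree (X ^ k * g).degree := degree_add_le _ _
      _ < h.degree := max_lt key hfg
end

section
/- Let f, g ∈ F₂[x] with f ≠ 0, and write f = f_r · f_s² where f_r is squarefree. Then f divides g² if and only if f_r · f_s divides g. -/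
/-- For `0 ≠ f ∈ F₂[x]` written as `f = f_r · f_s²` with `f_r` squarefree:
`f ∣ g² ↔ f_r·f_s ∣ g`. -/
theorem stmt_12 (f g fr fs : Polynomial (ZMod 2)) (hf : f ≠ 0)
    (hfact : f = fr * fs ^ 2) (hsqfree : Squarefree fr) :
    f ∣ g ^ 2 ↔ fr * fs ∣ g := by
  subst hfact
  have hfs : fs ≠ 0 := by rintro rfl; simp at hf
  have hfr : fr ≠ 0 := by rintro rfl; simp at hf
  constructor
  · intro h
    have hfs2 : fs ^ 2 ∣ g ^ 2 := (dvd_mul_left _ _).trans h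
    have hfsg : fs ∣ g := (IsIntegrallyClosed.pow_dvd_pow_iff two_ne_zero).mp hfs2
    obtain ⟨k, rfl⟩ := hfsg
    have : fr ∣ k ^ 2 := by
      have h' : fr * fs ^ 2 ∣ fs ^ 2 * k ^ 2 := by rw [← mul_pow]; exact h
      rw [mul_comm fr] at h'
      exact (mul_dvd_mul_iff_left (pow_ne_zero 2 hfs)).mp h'
    rw [mul_comm fr fs]
    exact mul_dvd_mul_left fs ((hsqfree.dvd_pow_iff_dvd two_ne_zero).mp this)
  · intro h
    calc fr * fs ^ 2 ∣ (fr * fs) ^ 2 := by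
          rw [mul_pow]; exact mul_dvd_mul (dvd_pow_self fr two_ne_zero) dvd_rfl
      _ ∣ g ^ 2 := pow_dvd_pow_of_dvd h 2
end

section
/- Let g, h, a, b ∈ F₂[x] with a² + a·b·g + b²·h = 1 and b ≠ 0. Write b = b_r·b_s² with b_r squarefree. Then b divides (1+a)², b_r divides g, and setting c = (1+a)/(b_r·b_s), one has c² + c·b_s·g + b_s²·h = g/b_r. -/
/-- If `a² + abg + b²h = 1` with `b ≠ 0` and `b = b_r·b_s²` (`b_r` squarefree), then
`b ∣ (1+a)²`, `b_r ∣ g`, and `c := (1+a)/(b_r·b_s)` satisfies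
`c² + c·b_s·g + b_s²·h = g/b_r`. -/
theorem stmt_13 (g h a b br bs : Polynomial (ZMod 2)) (hb : b ≠ 0)
    (hfact : b = br * bs ^ 2) (hsqfree : Squarefree br)
    (heq : a ^ 2 + a * b * g + b ^ 2 * h = 1) :
    b ∣ (1 + a) ^ 2 ∧ br ∣ g ∧
      ∃ c : Polynomial (ZMod 2), 1 + a = c * (br * bs) ∧
        br * (c ^ 2 + c * bs * g + bs ^ 2 * h) = g := by
  have htwo : (2 : Polynomial (ZMod 2)) = 0 := by
    have : ((2 : ℕ) : Polynomial (ZMod 2)) = 0 := CharP.cast_eq_zero _ 2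
    exact_mod_cast this
  have hbr : br ≠ 0 := fun h0 => hb (by simp [hfact, h0])
  have hbs : bs ≠ 0 := fun h0 => hb (by simp [hfact, h0])
  have key : (1 + a) ^ 2 = b * (a * g + b * h) := by
    linear_combination heq + (1 + a - a * b * g - b ^ 2 * h) * htwo
  have hbs_dvd : bs ∣ 1 + a := by
    rw [← IsIntegrallyClosed.pow_dvd_pow_iff (two_ne_zero)]
    exact ⟨br * (a * g + b * h), by rw [key, hfact]; ring⟩
  obtain ⟨d, hd⟩ := hbs_dvd
  have hd2 : d ^ 2 = br * (a * g + b * h) := by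
    have h2 : bs ^ 2 * d ^ 2 = bs ^ 2 * (br * (a * g + b * h)) := by
      rw [← mul_pow, ← hd, key, hfact]; ring
    exact mul_left_cancel₀ (pow_ne_zero 2 hbs) h2
  have hbrd : br ∣ d := (hsqfree.dvd_pow_iff_dvd two_ne_zero).mp ⟨_, hd2⟩
  obtain ⟨c, hc⟩ := hbrd
  have hA : 1 + a = c * (br * bs) := by rw [hd, hc]; ring
  have hH : c ^ 2 * br = a * g + b * h := by
    have h2 : br * (c ^ 2 * br) = br * (a * g + b * h) := by
      rw [← hd2, hc]; ring
    exact mul_left_cancel₀ hbr h2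
  have hfin : br * (c ^ 2 + c * bs * g + bs ^ 2 * h) = g := by
    rw [hfact] at hH
    linear_combination hH + g * hA + (a * g + br * bs ^ 2 * h + br * c * bs * g - g - g * a) * htwo
  exact ⟨⟨a * g + b * h, key⟩, ⟨_, hfin.symm⟩, c, hA, hfin⟩
end

section
/- Let g, h, c, d, e ∈ F₂[x] with e squarefree, e dividing g, and c² + c·d·g + d²·h = g/e. Then a := 1 + c·d·e and b := e·d² satisfy a² + a·b·g + b²·h = 1. -/
/-- If `e` is squarefree, `e ∣ g`, and `c² + cdg + d²h = g/e`, then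
`a := 1 + cde`, `b := ed²` satisfy `a² + abg + b²h = 1`. -/
theorem stmt_14 (g h c d e : Polynomial (ZMod 2)) (hsqfree : Squarefree e)
    (heq : e * (c ^ 2 + c * d * g + d ^ 2 * h) = g) :
    (1 + c * d * e) ^ 2 + (1 + c * d * e) * (e * d ^ 2) * g +
      (e * d ^ 2) ^ 2 * h = 1 := by
  have h2 : (2 : Polynomial (ZMod 2)) = 0 := by
    rw [← map_ofNat (Polynomial.C (R := ZMod 2)) 2, show (OfNat.ofNat 2 : ZMod 2) = 0 by decide, map_zero]
  linear_combination (e * d ^ 2 * (1 + c * d * e) + c * d ^ 3 * e ^ 2) * heq +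
    (c * d * e + e * d ^ 2 * g + c * d ^ 3 * e ^ 2 * g - c ^ 3 * d ^ 3 * e ^ 3 -
      c ^ 2 * d ^ 4 * e ^ 3 * g - c * d ^ 5 * e ^ 3 * h) * h2
end

section
/- Let g, h, a, b ∈ F₂[x] with deg g > deg h > 0, b ≠ 0, and a² + a·b·g + b²·h = 1. Then exactly one of the following holds: deg a = deg b + deg h − deg g, or deg a = deg b + deg g. -/
open Polynomial

/-- If `deg g > deg h > 0`, `b ≠ 0`, and `a² + abg + b²h = 1`, then exactly one of
`deg a = deg b + deg h − deg g` (i.e. `deg a + deg g = deg b + deg h`) or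
`deg a = deg b + deg g` holds. -/
theorem stmt_16 (g h a b : Polynomial (ZMod 2))
    (hgh : h.degree < g.degree) (hh : 0 < h.degree) (hb : b ≠ 0)
    (heq : a ^ 2 + a * b * g + b ^ 2 * h = 1) :
    Xor' (a.natDegree + g.natDegree = b.natDegree + h.natDegree)
      (a.natDegree = b.natDegree + g.natDegree) := by
  have hh0 : h ≠ 0 := fun e => by simp [e] at hh
  have hg0 : g ≠ 0 := ne_zero_of_degree_gt hgh
  have hH : 0 < h.natDegree := natDegree_pos_iff_degree_pos.mpr hh
  have hGH : h.natDegree < g.natDegree := natDegree_lt_natDegree hh0 hgh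
  have ha0 : a ≠ 0 := by
    intro e
    rw [e] at heq
    have heq2 : b ^ 2 * h = 1 := by linear_combination heq
    have : (b ^ 2 * h).natDegree = 0 := by rw [heq2]; simp
    rw [natDegree_mul (pow_ne_zero 2 hb) hh0, natDegree_pow] at this
    omega
  set A := a.natDegree with hA
  set B := b.natDegree with hB
  set G := g.natDegree with hG
  set H := h.natDegree with hHd
  have d1 : (a ^ 2).natDegree = 2 * A := by rw [natDegree_pow]; try ring
  have d2 : (a * b * g).natDegree = A + B + G := by
    rw [natDegree_mul (mul_ne_zero ha0 hb) hg0]; try rw [natDegree_mul ha0 hb]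
  have d3 : (b ^ 2 * h).natDegree = 2 * B + H := by
    rw [natDegree_mul (pow_ne_zero 2 hb) hh0]; try rw [natDegree_pow]
    try ring
  have hdeg : (a ^ 2 + a * b * g + b ^ 2 * h).natDegree = 0 := by rw [heq]; simp
  rcases lt_trichotomy A (B + G) with hc | hc | hc
  · -- a² has smaller degree than abg
    have e1 : (a ^ 2 + a * b * g).natDegree = A + B + G := by
      rw [natDegree_add_eq_right_of_natDegree_lt]; · exact d2
      rw [d1, d2]; omega
    rcases lt_trichotomy (A + B + G) (2 * B + H) with hc2 | hc2 | hc2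
    · have : (a ^ 2 + a * b * g + b ^ 2 * h).natDegree = 2 * B + H := by
        rw [natDegree_add_eq_right_of_natDegree_lt]; · exact d3
        rw [e1, d3]; omega
      omega
    · exact Or.inl ⟨by omega, by omega⟩
    · have : (a ^ 2 + a * b * g + b ^ 2 * h).natDegree = A + B + G := by
        rw [natDegree_add_eq_left_of_natDegree_lt]; · exact e1
        rw [e1, d3]; omega
      omega
  · exact Or.inr ⟨by omega, by omega⟩
  · -- a² dominates
    have e1 : (a ^ 2 + a * b * g).natDegree = 2 * A := by
      rw [natDegree_add_eq_left_of_natDegree_lt]; · exact d1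
      rw [d1, d2]; omega
    have : (a ^ 2 + a * b * g + b ^ 2 * h).natDegree = 2 * A := by
      rw [natDegree_add_eq_left_of_natDegree_lt]; · exact e1
      rw [e1, d3]; omega
    omega
end

section
/- Let g, h ∈ F₂[x] with g ∉ {0, 1}, and let R = F₂[x,y]/(y² + g·y + h). Then the unit group R^× is torsion-free. (Key lemma: for any a, b ∈ F₂[x] and n ∈ ℕ, (a + b·y)^{2^n} = a' + b^{2^n}·g^{2^n − 1}·y for some a' ∈ F₂[x].) -/
open Polynomial

/-- The quadratic `y² + g·y + h` over `F₂[x]`. -/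
noncomputable def quadPoly (g h : Polynomial (ZMod 2)) : Polynomial (Polynomial (ZMod 2)) :=
  X ^ 2 + C g * X + C h

open AdjoinRoot

section Aux
variable (g h : Polynomial (ZMod 2))

lemma qp_low : (C g * X + C h).degree < 2 :=
  lt_of_le_of_lt (le_trans (degree_add_le _ _)
    (max_le (degree_C_mul_X_le g) (degree_C_le.trans (by norm_num)))) (by norm_num)

lemma quad_monic : (quadPoly g h).Monic := by
  unfold quadPoly
  rw [add_assoc]
  exact Polynomial.monic_X_pow_add (qp_low g h)

lemma quad_degree : (quadPoly g h).degree = 2 := by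
  unfold quadPoly
  rw [add_assoc, Polynomial.degree_add_eq_left_of_degree_lt, Polynomial.degree_X_pow]
  · norm_cast
  · rw [Polynomial.degree_X_pow]
    have := qp_low g h
    exact_mod_cast this

lemma quad_natDegree : (quadPoly g h).natDegree = 2 :=
  Polynomial.natDegree_eq_of_degree_eq_some (quad_degree g h)

lemma rep_eq_zero {a b : Polynomial (ZMod 2)}
    (hab : of (quadPoly g h) a + of (quadPoly g h) b * root (quadPoly g h) = 0) :
    a = 0 ∧ b = 0 := by
  have hmk : AdjoinRoot.mk (quadPoly g h) (C b * X + C a) = 0 := by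
    rw [map_add, map_mul, mk_X, mk_C, mk_C]
    rw [← hab]; ring
  rw [AdjoinRoot.mk_eq_zero] at hmk
  have hz : C b * X + C a = 0 := by
    refine Polynomial.eq_zero_of_dvd_of_degree_lt hmk ?_
    rw [quad_degree]
    exact qp_low b a
  constructor
  · have := congrArg (fun p => Polynomial.coeff p 0) hz; simpa using this
  · have := congrArg (fun p => Polynomial.coeff p 1) hz; simpa using this

lemma of_injective : Function.Injective (of (quadPoly g h)) := by
  intro a b hab
  have h0 : of (quadPoly g h) (a - b) + of (quadPoly g h) 0 * root (quadPoly g h) = 0 := by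
    rw [map_sub, hab]; simp
  have := (rep_eq_zero g h h0).1
  linear_combination this

instance : CharP (AdjoinRoot (quadPoly g h)) 2 :=
  charP_of_injective_ringHom (of_injective g h) 2

lemma exists_rep (z : AdjoinRoot (quadPoly g h)) :
    ∃ a b, z = of (quadPoly g h) a + of (quadPoly g h) b * root (quadPoly g h) := by
  obtain ⟨p, rfl⟩ := AdjoinRoot.mk_surjective z
  refine ⟨(p %ₘ quadPoly g h).coeff 0, (p %ₘ quadPoly g h).coeff 1, ?_⟩
  conv_lhs => rw [← Polynomial.modByMonic_add_div p (quadPoly g h)]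
  rw [map_add, map_mul, AdjoinRoot.mk_self, zero_mul, add_zero]
  have hne : quadPoly g h ≠ 1 := by
    intro hc
    have := quad_natDegree g h
    rw [hc] at this; simp at this
  have hdeg : (p %ₘ quadPoly g h).degree ≤ 1 := by
    have h1 := Polynomial.natDegree_modByMonic_lt p (quad_monic g h) hne
    rw [quad_natDegree] at h1
    have h2 : (p %ₘ quadPoly g h).natDegree ≤ 1 := by omega
    calc (p %ₘ quadPoly g h).degree ≤ ((p %ₘ quadPoly g h).natDegree : WithBot ℕ) :=
          Polynomial.degree_le_natDegree
      _ ≤ (1 : WithBot ℕ) := by exact_mod_cast h2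
  conv_lhs => rw [Polynomial.eq_X_add_C_of_degree_le_one hdeg]
  rw [map_add, map_mul, mk_X, mk_C, mk_C]
  ring

lemma root_sq : (root (quadPoly g h)) ^ 2
    = of (quadPoly g h) g * root (quadPoly g h) + of (quadPoly g h) h := by
  have h2 : (2 : AdjoinRoot (quadPoly g h)) = 0 := by
    have := CharP.cast_eq_zero (AdjoinRoot (quadPoly g h)) 2
    exact_mod_cast this
  have hself : AdjoinRoot.mk (quadPoly g h) (X ^ 2 + C g * X + C h) = 0 :=
    AdjoinRoot.mk_eq_zero.mpr (by rw [quadPoly])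
  rw [map_add, map_add, map_pow, map_mul, mk_X, mk_C, mk_C] at hself
  linear_combination hself - (of (quadPoly g h) g * root (quadPoly g h) + of (quadPoly g h) h) * h2

lemma sq_rep (a b : Polynomial (ZMod 2)) :
    (of (quadPoly g h) a + of (quadPoly g h) b * root (quadPoly g h)) ^ 2
    = of (quadPoly g h) (a ^ 2 + h * b ^ 2)
      + of (quadPoly g h) (g * b ^ 2) * root (quadPoly g h) := by
  rw [CharTwo.add_sq, mul_pow, root_sq]
  rw [map_add, map_mul, map_mul, map_pow, map_pow]
  ring

lemma sq_eq_zero {z : AdjoinRoot (quadPoly g h)} (hg0 : g ≠ 0) (hz : z ^ 2 = 0) : z = 0 := by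
  obtain ⟨a, b, rfl⟩ := exists_rep g h z
  rw [sq_rep] at hz
  obtain ⟨h1, h2⟩ := rep_eq_zero g h hz
  have hb : b = 0 := by
    rcases mul_eq_zero.mp h2 with h' | h'
    · exact absurd h' hg0
    · exact pow_eq_zero_iff (n := 2) (by norm_num) |>.mp h'
  subst hb
  have ha : a = 0 := by
    have : a ^ 2 = 0 := by simpa using h1
    exact pow_eq_zero_iff (n := 2) (by norm_num) |>.mp this
  simp [ha]


lemma rep_unique {a b c d : Polynomial (ZMod 2)}
    (hab : of (quadPoly g h) a + of (quadPoly g h) b * root (quadPoly g h)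
         = of (quadPoly g h) c + of (quadPoly g h) d * root (quadPoly g h)) :
    a = c ∧ b = d := by
  have h0 : of (quadPoly g h) (a - c) + of (quadPoly g h) (b - d) * root (quadPoly g h) = 0 := by
    rw [map_sub, map_sub]
    linear_combination hab
  obtain ⟨h1, h2⟩ := rep_eq_zero g h h0
  exact ⟨by linear_combination h1, by linear_combination h2⟩

lemma pow_two_pow (a b : Polynomial (ZMod 2)) (j : ℕ) :
    ∃ c, (of (quadPoly g h) a + of (quadPoly g h) b * root (quadPoly g h)) ^ (2 ^ j)
      = of (quadPoly g h) c
        + of (quadPoly g h) (b ^ (2 ^ j) * g ^ (2 ^ j - 1)) * root (quadPoly g h) := by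
  induction j with
  | zero => exact ⟨a, by simp⟩
  | succ j ih =>
    obtain ⟨c, hc⟩ := ih
    refine ⟨c ^ 2 + h * (b ^ (2 ^ j) * g ^ (2 ^ j - 1)) ^ 2, ?_⟩
    rw [pow_succ, pow_mul, hc, sq_rep]
    have h1 : 1 ≤ 2 ^ j := Nat.one_le_two_pow
    have e2 : 2 ^ (j + 1) - 1 = (2 ^ j - 1) * 2 + 1 := by
      rw [pow_succ]; omega
    have key : g * (b ^ (2 ^ j) * g ^ (2 ^ j - 1)) ^ 2
        = b ^ (2 ^ (j + 1)) * g ^ (2 ^ (j + 1) - 1) := by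
      rw [mul_pow, ← pow_mul, ← pow_mul, e2, pow_succ, ← pow_succ 2 j]
      ring
    rw [key, pow_succ 2 j]

lemma sq_injective (hg0 : g ≠ 0) {z w : AdjoinRoot (quadPoly g h)}
    (hzw : z ^ 2 = w ^ 2) : z = w := by
  have : (z - w) ^ 2 = 0 := by
    rw [CharTwo.sub_eq_add, CharTwo.add_sq, hzw, CharTwo.add_self_eq_zero]
  have := sq_eq_zero g h hg0 this
  linear_combination this

lemma two_pow_torsion (hg0 : g ≠ 0) (u : (AdjoinRoot (quadPoly g h))ˣ) (k : ℕ)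
    (hu : u ^ (2 ^ k) = 1) : u = 1 := by
  induction k with
  | zero => simpa using hu
  | succ k ih =>
    apply ih
    have h1 : ((u ^ (2 ^ k) : _ˣ) : AdjoinRoot (quadPoly g h)) ^ 2 = 1 ^ 2 := by
      rw [← Units.val_pow_eq_pow_val, ← pow_mul, ← pow_succ, hu]
      simp
    have := sq_injective g h hg0 h1
    ext
    simpa using this

lemma g_natDegree_pos (hg0 : g ≠ 0) (hg1 : g ≠ 1) : 0 < g.natDegree := by
  by_contra hc
  push_neg at hc
  have h0 : g.natDegree = 0 := Nat.le_zero.mp hc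
  obtain ⟨r, hr⟩ := Polynomial.natDegree_eq_zero.mp h0
  have hr01 : r = 0 ∨ r = 1 := by
    have : ∀ x : ZMod 2, x = 0 ∨ x = 1 := by decide
    exact this r
  rcases hr01 with rfl | rfl
  · exact hg0 (by simp [← hr])
  · exact hg1 (by simp [← hr])

lemma odd_torsion (hg0 : g ≠ 0) (hg1 : g ≠ 1) (u : (AdjoinRoot (quadPoly g h))ˣ)
    (m : ℕ) (hm : Odd m) (hum : u ^ m = 1) : u = 1 := by
  rcases eq_or_ne m 1 with rfl | hm1
  · simpa using hum
  have hm0 : m ≠ 0 := by rintro rfl; exact (Nat.not_odd_iff_even.mpr Even.zero) hm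
  set j := Nat.totient m with hj
  have hj1 : 1 ≤ j := Nat.totient_pos.mpr (by omega)
  have hcop : Nat.Coprime 2 m := by
    exact Nat.coprime_two_left.mpr hm
  have hmod : 2 ^ j ≡ 1 [MOD m] := Nat.ModEq.pow_totient hcop
  have h2j : 1 ≤ 2 ^ j := Nat.one_le_two_pow
  have hdvd : m ∣ 2 ^ j - 1 := (Nat.modEq_iff_dvd' h2j).mp hmod.symm
  obtain ⟨t, ht⟩ := hdvd
  have hupow : u ^ (2 ^ j) = u := by
    have he : 2 ^ j = 1 + m * t := by omega
    rw [he, pow_add, pow_mul, hum, one_pow, mul_one, pow_one]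
  obtain ⟨a, b, hab⟩ := exists_rep g h (u : AdjoinRoot (quadPoly g h))
  obtain ⟨c, hc⟩ := pow_two_pow g h a b j
  have hcoe : ((u : AdjoinRoot (quadPoly g h))) ^ (2 ^ j) = (u : AdjoinRoot (quadPoly g h)) := by
    rw [← Units.val_pow_eq_pow_val, hupow]
  rw [hab] at hcoe
  rw [hc] at hcoe
  have hbd := (rep_unique g h hcoe).2
  -- hbd : b ^ 2 ^ j * g ^ (2 ^ j - 1) = b
  have hb0 : b = 0 := by
    by_contra hb
    have hbne : b ^ 2 ^ j ≠ 0 := pow_ne_zero _ hb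
    have hgne : g ^ (2 ^ j - 1) ≠ 0 := pow_ne_zero _ hg0
    have hdeg := congrArg Polynomial.natDegree hbd
    rw [Polynomial.natDegree_mul hbne hgne, Polynomial.natDegree_pow,
      Polynomial.natDegree_pow] at hdeg
    have hgd : 1 ≤ g.natDegree := g_natDegree_pos g hg0 hg1
    have ht2 : 2 ≤ 2 ^ j := by
      calc 2 = 2 ^ 1 := (pow_one 2).symm
        _ ≤ 2 ^ j := Nat.pow_le_pow_right (by norm_num) hj1
    have hA : b.natDegree ≤ 2 ^ j * b.natDegree := Nat.le_mul_of_pos_left _ (by omega)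
    have hB : 1 ≤ (2 ^ j - 1) * g.natDegree := Nat.one_le_iff_ne_zero.mpr
      (Nat.mul_ne_zero (by omega) (by omega))
    linarith
  subst hb0
  have hua : (u : AdjoinRoot (quadPoly g h)) = of (quadPoly g h) a := by
    rw [hab]; simp
  have ham : a ^ m = 1 := by
    apply of_injective g h
    rw [map_pow, ← hua, map_one, ← Units.val_pow_eq_pow_val, hum, Units.val_one]
  have ha1 : a = 1 := by
    have hd := congrArg Polynomial.natDegree ham
    rw [Polynomial.natDegree_pow, Polynomial.natDegree_one] at hd
    have had : a.natDegree = 0 := by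
      rcases Nat.mul_eq_zero.mp hd with h' | h'
      · omega
      · exact h'
    obtain ⟨r, hr⟩ := Polynomial.natDegree_eq_zero.mp had
    have hr01 : r = 0 ∨ r = 1 := by
      have : ∀ x : ZMod 2, x = 0 ∨ x = 1 := by decide
      exact this r
    rcases hr01 with rfl | rfl
    · exfalso
      rw [← hr] at ham
      rw [← Polynomial.C_pow, zero_pow hm0] at ham
      simp at ham
    · rw [← hr]; simp
  ext
  rw [hua, ha1, map_one, Units.val_one]


/-- If `g ∉ {0,1}`, the unit group of `F₂[x,y]/(y² + gy + h)` is torsion-free. -/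

theorem stmt_17 (g h : Polynomial (ZMod 2)) (hg0 : g ≠ 0) (hg1 : g ≠ 1)
    (u : (AdjoinRoot (quadPoly g h))ˣ) (n : ℕ) (hn : 0 < n) (hun : u ^ n = 1) :
    u = 1 := by
  obtain ⟨k, m, hm, rfl⟩ := Nat.exists_eq_two_pow_mul_odd (Nat.pos_iff_ne_zero.mp hn)
  have hum : u ^ m = 1 := by
    apply two_pow_torsion g h hg0 (u ^ m) k
    rw [← pow_mul, mul_comm m (2 ^ k), hun]
  exact odd_torsion g h hg0 hg1 u m hm hum
end Aux
end

section
/- For h ∈ F₂[x], the unit group of F₂[x,y]/(y² + h) is nontrivial if and only if h is a square in F₂[x]; moreover when h = f² the unit group is isomorphic to the additive group (F₂[x], +), via r ↦ 1 + r·(y + f). -/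
open Polynomial

/-- The polynomial `y² + h` over `F₂[x]`. -/
noncomputable def sqPoly (h : Polynomial (ZMod 2)) : Polynomial (Polynomial (ZMod 2)) :=
  X ^ 2 + C h

namespace SqAux

abbrev P2 := Polynomial (ZMod 2)

lemma two0 : (2 : P2) = 0 := by
  have h2 : (2 : ZMod 2) = 0 := by decide
  calc (2 : P2) = C (2 : ZMod 2) := by rw [map_ofNat]
    _ = C 0 := by rw [h2]
    _ = 0 := map_zero _

lemma unit_eq_one {p : P2} (hp : IsUnit p) : p = 1 := by
  obtain ⟨r, hr, rfl⟩ := Polynomial.isUnit_iff.mp hp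
  have key : ∀ s : ZMod 2, IsUnit s → s = 1 := by decide
  rw [key r hr, map_one]

lemma sq_eq_one {p : P2} (hp : p ^ 2 = 1) : p = 1 := by
  have h1 : (p + 1) ^ 2 = 0 := by linear_combination hp + (p + 1) * two0
  have h2 : p + 1 = 0 := (pow_eq_zero_iff (by norm_num : (2:ℕ) ≠ 0)).mp h1
  linear_combination h2 - two0

variable (h : Polynomial (ZMod 2))

lemma monic_sqPoly : (sqPoly h).Monic :=
  Polynomial.monic_X_pow_add_C _ (by norm_num)

lemma degree_sqPoly : (sqPoly h).degree = 2 :=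
  Polynomial.degree_X_pow_add_C (by norm_num) _

local notation "R" => AdjoinRoot (sqPoly h)
local notation "av" => AdjoinRoot.of (sqPoly h)
local notation "rt" => AdjoinRoot.root (sqPoly h)

lemma two0R : (2 : R) = 0 := by
  calc (2 : R) = av (2 : P2) := by rw [map_ofNat]
    _ = av 0 := by rw [two0]
    _ = 0 := map_zero _

lemma root_sq : rt ^ 2 = av h := by
  have h1 : AdjoinRoot.mk (sqPoly h) (X ^ 2 + C h) = 0 := AdjoinRoot.mk_self
  rw [map_add, map_pow, AdjoinRoot.mk_X, AdjoinRoot.mk_C] at h1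
  linear_combination h1 - av h * two0R h

lemma repr_exists (z : R) : ∃ a b : P2, z = av a + av b * rt := by
  obtain ⟨g, rfl⟩ := AdjoinRoot.mk_surjective (g := sqPoly h) z
  refine ⟨(g %ₘ sqPoly h).coeff 0, (g %ₘ sqPoly h).coeff 1, ?_⟩
  have hd : (g %ₘ sqPoly h).degree ≤ 1 := by
    have := Polynomial.degree_modByMonic_lt g (monic_sqPoly h)
    rw [degree_sqPoly] at this
    exact Order.le_of_lt_succ (by exact_mod_cast this)
  have hrepr := Polynomial.eq_X_add_C_of_degree_le_one hd
  have hmod : AdjoinRoot.mk (sqPoly h) (g %ₘ sqPoly h) = AdjoinRoot.mk (sqPoly h) g := by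
    conv_rhs => rw [← Polynomial.modByMonic_add_div g (sqPoly h)]
    rw [map_add, map_mul, AdjoinRoot.mk_self, zero_mul, add_zero]
  rw [← hmod]
  conv_lhs => rw [hrepr]
  rw [map_add, map_mul, AdjoinRoot.mk_C, AdjoinRoot.mk_C, AdjoinRoot.mk_X]
  ring

lemma repr_unique {a b : P2} (hab : av a + av b * rt = 0) : a = 0 ∧ b = 0 := by
  have h1 : AdjoinRoot.mk (sqPoly h) (C b * X + C a) = 0 := by
    rw [map_add, map_mul, AdjoinRoot.mk_C, AdjoinRoot.mk_C, AdjoinRoot.mk_X]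
    linear_combination hab
  rw [AdjoinRoot.mk_eq_zero] at h1
  have h2 : (C b * X + C a : Polynomial P2) = 0 := by
    refine Polynomial.eq_zero_of_dvd_of_degree_lt h1 ?_
    rw [degree_sqPoly]
    exact lt_of_le_of_lt Polynomial.degree_linear_le (by norm_num)
  constructor
  · simpa using congrArg (fun p => Polynomial.coeff p 0) h2
  · simpa using congrArg (fun p => Polynomial.coeff p 1) h2

lemma coords_eq {a b c d : P2} (hq : av a + av b * rt = av c + av d * rt) :
    a = c ∧ b = d := by
  have h0 : av (a - c) + av (b - d) * rt = 0 := by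
    rw [map_sub, map_sub]; linear_combination hq
  obtain ⟨h1, h2⟩ := repr_unique h h0
  exact ⟨sub_eq_zero.mp h1, sub_eq_zero.mp h2⟩

lemma mul_repr (a b c d : P2) :
    (av a + av b * rt) * (av c + av d * rt)
      = av (a * c + b * d * h) + av (a * d + b * c) * rt := by
  simp only [map_add, map_mul]
  linear_combination (av b * av d) * root_sq h

lemma norm_one {a b : P2} (hu : IsUnit (av a + av b * rt)) : a ^ 2 + b ^ 2 * h = 1 := by
  obtain ⟨v, hv⟩ := hu.exists_right_inv
  obtain ⟨c, d, rfl⟩ := repr_exists h v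
  rw [mul_repr] at hv
  have h1' : av (a * c + b * d * h) + av (a * d + b * c) * rt = av 1 + av 0 * rt := by
    simpa using hv
  obtain ⟨e1, e2⟩ := coords_eq h h1'
  have key : (a ^ 2 + b ^ 2 * h) * (c ^ 2 + d ^ 2 * h) = 1 := by
    linear_combination (a*c + b*d*h + 1) * e1 + h * (a*d + b*c) * e2 + (-2*a*b*c*d*h) * two0
  apply unit_eq_one (IsUnit.of_mul_eq_one _ key)

/-- main construction -/
lemma construction (f : P2) (hf : h = f ^ 2) :
    ∃ e : Multiplicative P2 ≃* Rˣ,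
      ∀ r : P2, (e (Multiplicative.ofAdd r) : R) = 1 + av r * (rt + av f) := by
  have wsq : (rt + av f) ^ 2 = 0 := by
    have hfh : av h = (av f) ^ 2 := by rw [hf, map_pow]
    linear_combination root_sq h + hfh + ((av f) ^ 2 + rt * av f) * two0R h
  have hmul : ∀ r s : P2, (1 + av r * (rt + av f)) * (1 + av s * (rt + av f))
      = 1 + av (r + s) * (rt + av f) := by
    intro r s
    rw [map_add]
    linear_combination (av r * av s) * wsq
  have hself : ∀ r : P2, (1 + av r * (rt + av f)) * (1 + av r * (rt + av f)) = 1 := by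
    intro r
    rw [hmul]
    have : r + r = 0 := by linear_combination r * two0
    rw [this, map_zero, zero_mul, add_zero]
  let φf : P2 → Rˣ := fun r => ⟨1 + av r * (rt + av f), 1 + av r * (rt + av f), hself r, hself r⟩
  let φ : Multiplicative P2 →* Rˣ := MonoidHom.mk' (fun r => φf r.toAdd)
    (by
      intro r s
      apply Units.ext
      show (1 + av (r.toAdd + s.toAdd) * (rt + av f)) = _
      rw [← hmul]
      rfl)
  have hinj : Function.Injective φ := by
    intro r s hrs
    have hv : (1 + av r.toAdd * (rt + av f)) = (1 + av s.toAdd * (rt + av f)) :=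
      congrArg Units.val hrs
    have hv2 : av (r.toAdd * f) + av r.toAdd * rt = av (s.toAdd * f) + av s.toAdd * rt := by
      rw [map_mul, map_mul]; linear_combination hv
    have := (coords_eq h hv2).2
    exact Multiplicative.toAdd.injective this
  have hsurj : Function.Surjective φ := by
    intro u
    obtain ⟨a, b, hab⟩ := repr_exists h (u : R)
    have hu : IsUnit (av a + av b * rt) := hab ▸ u.isUnit
    have hn := norm_one h hu
    have hkey : (a + b * f) ^ 2 = 1 := by
      linear_combination hn + (a * b * f) * two0 + (- b ^ 2) * hf
    have h1 : a + b * f = 1 := sq_eq_one hkey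
    have ha : a = 1 + b * f := by linear_combination h1 - b * f * two0
    refine ⟨Multiplicative.ofAdd b, ?_⟩
    apply Units.ext
    show (1 + av b * (rt + av f)) = (u : R)
    rw [hab, ha, map_add, map_one, map_mul, mul_add]
    ring
  refine ⟨MulEquiv.ofBijective φ ⟨hinj, hsurj⟩, fun r => rfl⟩

end SqAux

open SqAux in
/-- The unit group of `F₂[x,y]/(y² + h)` is nontrivial iff `h` is a square; when
`h = f²` the unit group is isomorphic to `(F₂[x], +)` via `r ↦ 1 + r·(y + f)`. -/
theorem stmt_18 (h : Polynomial (ZMod 2)) :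
    ((∃ u : (AdjoinRoot (sqPoly h))ˣ, u ≠ 1) ↔ IsSquare h) ∧
    (∀ f : Polynomial (ZMod 2), h = f ^ 2 →
      ∃ e : Multiplicative (Polynomial (ZMod 2)) ≃* (AdjoinRoot (sqPoly h))ˣ,
        ∀ r : Polynomial (ZMod 2),
          (e (Multiplicative.ofAdd r) : AdjoinRoot (sqPoly h)) =
            1 + AdjoinRoot.of (sqPoly h) r *
              (AdjoinRoot.root (sqPoly h) + AdjoinRoot.of (sqPoly h) f)) := by
  constructor
  · constructor
    · rintro ⟨u, hu⟩
      obtain ⟨a, b, hab⟩ := repr_exists h (u : AdjoinRoot (sqPoly h))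
      have hn := norm_one h (hab ▸ u.isUnit)
      by_cases hb : b = 0
      · exfalso
        apply hu
        have ha : a ^ 2 = 1 := by rw [hb] at hn; linear_combination hn
        have ha1 : a = 1 := sq_eq_one ha
        apply Units.ext
        rw [Units.val_one, hab, hb, ha1, map_one, map_zero, zero_mul, add_zero]
      · have hbsq : b ^ 2 * h = (a + 1) ^ 2 := by
          linear_combination hn + (-a^2 - a) * two0
        have hdvd : b ^ 2 ∣ (a + 1) ^ 2 := ⟨h, hbsq.symm⟩
        have hdvd2 : b ∣ a + 1 := (IsIntegrallyClosed.pow_dvd_pow_iff (by norm_num : (2:ℕ) ≠ 0)).mp hdvd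
        obtain ⟨c, hc⟩ := hdvd2
        have hh : h = c ^ 2 := by
          have : b ^ 2 * h = b ^ 2 * c ^ 2 := by rw [hbsq, hc]; ring
          exact mul_left_cancel₀ (pow_ne_zero 2 hb) this
        exact ⟨c, by rw [hh]; ring⟩
    · rintro ⟨c, hc⟩
      obtain ⟨e, he⟩ := construction h c (by rw [hc]; ring)
      refine ⟨e (Multiplicative.ofAdd X), ?_⟩
      intro hcon
      have : Multiplicative.ofAdd (X : Polynomial (ZMod 2)) = 1 := by
        apply e.injective
        rw [hcon, map_one]
      have hX : (X : Polynomial (ZMod 2)) = 0 := by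
        simpa using congrArg Multiplicative.toAdd this
      exact Polynomial.X_ne_zero hX
  · exact fun f hf => construction h f hf
end

section
/- For h ∈ F₂[x], the unit group of F₂[x,y]/(y² + y + h) is nontrivial if and only if h = f² + f + 1 for some f ∈ F₂[x], in which case the unit group is cyclic of order 3 generated by f + y. -/
open Polynomial

open AdjoinRoot

abbrev R := Polynomial (ZMod 2)

/-- The polynomial `y² + y + h` over `F₂[x]`. -/
noncomputable def artinPoly (h : Polynomial (ZMod 2)) : Polynomial (Polynomial (ZMod 2)) :=
  X ^ 2 + X + C h

lemma two_R : (2 : R) = 0 := by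
  have h2 : ((2:ZMod 2)) = 0 := by decide
  have : (2:R) = C (2 : ZMod 2) := by rw [map_ofNat]
  rw [this, h2, map_zero]

lemma artin_monic (h : R) : (artinPoly h).Monic := by
  have : artinPoly h = X ^ 2 + (X + C h) := by rw [artinPoly, add_assoc]
  rw [this]
  apply Polynomial.monic_X_pow_add
  apply lt_of_le_of_lt (Polynomial.degree_add_le _ _)
  simp only [degree_X, max_lt_iff]
  constructor
  · decide
  · exact lt_of_le_of_lt (degree_C_le) (by decide)

lemma artin_degree (h : R) : (artinPoly h).degree = 2 := by
  have : artinPoly h = X ^ 2 + (X + C h) := by rw [artinPoly, add_assoc]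
  rw [this]
  rw [Polynomial.degree_add_eq_left_of_degree_lt]
  · simp
  · rw [degree_X_pow]
    apply lt_of_le_of_lt (Polynomial.degree_add_le _ _)
    simp only [degree_X, max_lt_iff]
    exact ⟨by decide, lt_of_le_of_lt (degree_C_le) (by decide)⟩

variable {h : R}

local notation "A" => AdjoinRoot (artinPoly h)

lemma two_A : (2 : A) = 0 := by
  rw [show (2:A) = AdjoinRoot.of _ (2:R) by rw [map_ofNat], two_R, map_zero]

lemma root_rel : (root (artinPoly h))^2 + root (artinPoly h) + AdjoinRoot.of _ h = 0 := by
  have := AdjoinRoot.mk_self (f := artinPoly h)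
  rw [artinPoly] at this
  simp [map_add, map_pow] at this
  exact this

lemma rep_exists (z : A) : ∃ a b : R, z = AdjoinRoot.of _ a + AdjoinRoot.of _ b * root (artinPoly h) := by
  obtain ⟨q, rfl⟩ := AdjoinRoot.mk_surjective z
  have hm := artin_monic h
  have key : AdjoinRoot.mk (artinPoly h) q = AdjoinRoot.mk (artinPoly h) (q %ₘ artinPoly h) := by
    conv_lhs => rw [← Polynomial.modByMonic_add_div q (artinPoly h)]
    rw [map_add, map_mul, AdjoinRoot.mk_self, zero_mul, add_zero]
  have hdeg : (q %ₘ artinPoly h).natDegree ≤ 1 := by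
    have := Polynomial.degree_modByMonic_lt q hm
    rw [artin_degree] at this
    rcases eq_or_ne (q %ₘ artinPoly h) 0 with h0 | h0
    · simp [h0]
    · have := (Polynomial.degree_eq_natDegree h0) ▸ this
      exact_mod_cast Nat.lt_succ_iff.mp (by exact_mod_cast this)
  obtain ⟨b, a, hab⟩ := Polynomial.exists_eq_X_add_C_of_natDegree_le_one hdeg
  refine ⟨a, b, ?_⟩
  rw [key, hab, map_add, map_mul, AdjoinRoot.mk_C, AdjoinRoot.mk_X, add_comm]
  rfl

lemma rep_zero {a b : R} (hz : AdjoinRoot.of (artinPoly h) a + AdjoinRoot.of (artinPoly h) b * root (artinPoly h) = 0) :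
    a = 0 ∧ b = 0 := by
  have : AdjoinRoot.mk (artinPoly h) (C a + C b * X) = 0 := by
    rw [map_add, map_mul, AdjoinRoot.mk_C, AdjoinRoot.mk_X]
    exact hz
  rw [AdjoinRoot.mk_eq_zero] at this
  have h0 : C a + C b * X = 0 := by
    apply Polynomial.eq_zero_of_dvd_of_degree_lt this
    rw [artin_degree]
    apply lt_of_le_of_lt (Polynomial.degree_add_le _ _)
    simp only [max_lt_iff]
    refine ⟨lt_of_le_of_lt degree_C_le (by decide), ?_⟩
    apply lt_of_le_of_lt (Polynomial.degree_mul_le _ _)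
    calc (C b).degree + (X:Polynomial R).degree ≤ 0 + 1 := by
          exact add_le_add degree_C_le (le_of_eq degree_X)
      _ < 2 := by decide
  constructor
  · have := congrArg (fun p => Polynomial.coeff p 0) h0
    simpa using this
  · have := congrArg (fun p => Polynomial.coeff p 1) h0
    simpa using this

lemma rep_unique_s19 {a b a' b' : R}
    (he : AdjoinRoot.of (artinPoly h) a + AdjoinRoot.of (artinPoly h) b * root (artinPoly h)
        = AdjoinRoot.of (artinPoly h) a' + AdjoinRoot.of (artinPoly h) b' * root (artinPoly h)) :
    a = a' ∧ b = b' := by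
  have := rep_zero (a := a - a') (b := b - b') (by
    rw [map_sub, map_sub]
    linear_combination he)
  exact ⟨sub_eq_zero.mp this.1, sub_eq_zero.mp this.2⟩

lemma mul_rep (a b c d : R) :
    (AdjoinRoot.of (artinPoly h) a + AdjoinRoot.of (artinPoly h) b * root (artinPoly h)) *
    (AdjoinRoot.of (artinPoly h) c + AdjoinRoot.of (artinPoly h) d * root (artinPoly h)) =
    AdjoinRoot.of (artinPoly h) (a*c + b*d*h) +
      AdjoinRoot.of (artinPoly h) (a*d + b*c + b*d) * root (artinPoly h) := by
  have hr := root_rel (h := h)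
  have h2 := two_A (h := h)
  simp only [map_add, map_mul]
  linear_combination (AdjoinRoot.of (artinPoly h) b * AdjoinRoot.of (artinPoly h) d) * hr -
    (AdjoinRoot.of (artinPoly h) b * AdjoinRoot.of (artinPoly h) d *
      (root (artinPoly h) + AdjoinRoot.of (artinPoly h) h)) * h2

noncomputable def sigma (h : R) : AdjoinRoot (artinPoly h) →+* AdjoinRoot (artinPoly h) :=
  AdjoinRoot.lift (AdjoinRoot.of (artinPoly h)) (root (artinPoly h) + 1) (by
    have hr := root_rel (h := h)
    have h2 := two_A (h := h)
    conv_lhs => arg 3; rw [artinPoly]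
    simp only [eval₂_add, eval₂_pow, eval₂_X, eval₂_C]
    linear_combination hr + (root (artinPoly h) + 1) * h2)

lemma sigma_rep (a b : R) :
    sigma h (AdjoinRoot.of (artinPoly h) a + AdjoinRoot.of (artinPoly h) b * root (artinPoly h)) =
    AdjoinRoot.of (artinPoly h) (a + b) + AdjoinRoot.of (artinPoly h) b * root (artinPoly h) := by
  rw [sigma]
  simp only [map_add, map_mul, AdjoinRoot.lift_of, AdjoinRoot.lift_root]
  ring

lemma norm_eq (a b : R) :
    (AdjoinRoot.of (artinPoly h) a + AdjoinRoot.of (artinPoly h) b * root (artinPoly h)) *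
    sigma h (AdjoinRoot.of (artinPoly h) a + AdjoinRoot.of (artinPoly h) b * root (artinPoly h)) =
    AdjoinRoot.of (artinPoly h) (a^2 + a*b + b^2*h) := by
  rw [sigma_rep, mul_rep]
  have e1 : a*(a+b) + b*b*h = a^2 + a*b + b^2*h := by ring
  have e3 : a*b + b*(a+b) + b*b = 0 := by linear_combination (a*b + b^2) * two_R
  rw [e1, e3, map_zero, zero_mul, add_zero]

lemma unit_R_eq_one {p : R} (hp : IsUnit p) : p = 1 := by
  obtain ⟨r, hr, hCr⟩ := Polynomial.isUnit_iff.mp hp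
  have key : ∀ s : ZMod 2, s ≠ 0 → s = 1 := by decide
  have h1 : r = 1 := key r hr.ne_zero
  rw [← hCr, h1, map_one]

lemma norm_one {v : (AdjoinRoot (artinPoly h))ˣ} {a b : R}
    (hv : (v : AdjoinRoot (artinPoly h)) =
      AdjoinRoot.of (artinPoly h) a + AdjoinRoot.of (artinPoly h) b * root (artinPoly h)) :
    a^2 + a*b + b^2*h = 1 := by
  have hu : IsUnit (AdjoinRoot.of (artinPoly h) (a^2 + a*b + b^2*h)) := by
    rw [← norm_eq, ← hv]
    exact v.isUnit.mul (v.isUnit.map (sigma h))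
  obtain ⟨z, hz⟩ := isUnit_iff_exists_inv.mp hu
  obtain ⟨c, d, rfl⟩ := rep_exists z
  set N := a^2 + a*b + b^2*h with hN
  have : AdjoinRoot.of (artinPoly h) (N*c) + AdjoinRoot.of (artinPoly h) (N*d) * root (artinPoly h)
      = AdjoinRoot.of (artinPoly h) 1 + AdjoinRoot.of (artinPoly h) 0 * root (artinPoly h) := by
    rw [map_mul, map_mul, map_one, map_zero, zero_mul, add_zero]
    rw [mul_add, ← mul_assoc] at hz
    exact hz
  have hNc := (rep_unique_s19 this).1
  exact unit_R_eq_one (IsUnit.of_mul_eq_one _ hNc)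

lemma b_cases {a b H : R} (he : a^2 + a*b + b^2*H = 1) : b = 0 ∨ b = 1 := by
  by_cases hb : b = 0
  · exact Or.inl hb
  right
  have key2 : ∀ s : ZMod 2, s ≠ 0 → s = 1 := by decide
  have hmb : b.Monic := key2 _ (Polynomial.leadingCoeff_ne_zero.mpr hb)
  by_cases hm0 : b.natDegree = 0
  · exact hmb.natDegree_eq_zero.mp hm0
  exfalso
  set m := b.natDegree with hmdef
  have hm1 : 1 ≤ m := Nat.one_le_iff_ne_zero.mpr hm0
  set q := a /ₘ b with hqdef
  set r := a %ₘ b with hrdef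
  have ha : a = r + b * q := (Polynomial.modByMonic_add_div a b).symm
  rw [ha] at he
  have key : b^2*(q^2+q+H) = 1 + r^2 + r*b := by
    linear_combination he - (r^2 + r*b*q + r*b) * two_R
  by_cases hq : q^2+q+H = 0
  · rw [hq, mul_zero] at key
    have h1 : r*(r+b) = 1 := by linear_combination (-1 : R) * key - two_R
    have hr1 : r = 1 := unit_R_eq_one (IsUnit.of_mul_eq_one _ h1)
    have hrb1 : r + b = 1 := unit_R_eq_one (IsUnit.of_mul_eq_one _ (by rw [mul_comm] at h1; exact h1))
    exact hb (by linear_combination hrb1 - hr1)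
  · have hL : (b^2*(q^2+q+H)).natDegree = 2*m + (q^2+q+H).natDegree := by
      rw [Polynomial.natDegree_mul (pow_ne_zero 2 hb) hq, Polynomial.natDegree_pow]
    have hRdeg : (1 + r^2 + r*b).natDegree < 2*m := by
      by_cases hr : r = 0
      · simp [hr]; omega
      · have hrm : r.natDegree < m :=
          Polynomial.natDegree_lt_natDegree hr (Polynomial.degree_modByMonic_lt a hmb)
        apply lt_of_le_of_lt (Polynomial.natDegree_add_le _ _)
        rw [max_lt_iff]
        constructor
        · apply lt_of_le_of_lt (Polynomial.natDegree_add_le _ _)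
          rw [max_lt_iff]
          constructor
          · simpa using by omega
          · rw [Polynomial.natDegree_pow]; omega
        · apply lt_of_le_of_lt (Polynomial.natDegree_mul_le)
          omega
    rw [key] at hL
    omega

lemma main_aux (f : R) (hf : h = f^2+f+1) :
    ∃ u : (AdjoinRoot (artinPoly h))ˣ,
      (u : AdjoinRoot (artinPoly h)) =
        AdjoinRoot.of (artinPoly h) f + AdjoinRoot.root (artinPoly h) ∧
      orderOf u = 3 ∧
      ∀ v : (AdjoinRoot (artinPoly h))ˣ, v ∈ Subgroup.zpowers u := by
  have c1 : f*(f+1) + 1*1*h = 1 := by linear_combination hf + (f^2+f)*two_R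
  have c2 : f*1 + 1*(f+1) + 1*1 = 0 := by linear_combination (f+1)*two_R
  have hmul : (AdjoinRoot.of (artinPoly h) f + AdjoinRoot.of (artinPoly h) 1 * root (artinPoly h)) *
      (AdjoinRoot.of (artinPoly h) (f+1) + AdjoinRoot.of (artinPoly h) 1 * root (artinPoly h)) = 1 := by
    rw [mul_rep, c1, c2, map_one, map_zero, zero_mul, add_zero]
  set u : (AdjoinRoot (artinPoly h))ˣ :=
    ⟨AdjoinRoot.of (artinPoly h) f + AdjoinRoot.of (artinPoly h) 1 * root (artinPoly h),
     AdjoinRoot.of (artinPoly h) (f+1) + AdjoinRoot.of (artinPoly h) 1 * root (artinPoly h),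
     hmul, by rw [mul_comm]; exact hmul⟩ with hu
  have hval0 : (u : AdjoinRoot (artinPoly h)) =
      AdjoinRoot.of (artinPoly h) f + AdjoinRoot.of (artinPoly h) 1 * AdjoinRoot.root (artinPoly h) := rfl
  have hval : (u : AdjoinRoot (artinPoly h)) =
      AdjoinRoot.of (artinPoly h) f + AdjoinRoot.root (artinPoly h) := by
    rw [hval0, map_one, one_mul]
  have hne : u ≠ 1 := by
    intro h1
    have r1 : AdjoinRoot.of (artinPoly h) 1 + AdjoinRoot.of (artinPoly h) 0 * root (artinPoly h)
        = (1 : AdjoinRoot (artinPoly h)) := by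
      rw [map_zero, zero_mul, add_zero, map_one]
    have : AdjoinRoot.of (artinPoly h) f + AdjoinRoot.of (artinPoly h) 1 * root (artinPoly h) =
        AdjoinRoot.of (artinPoly h) 1 + AdjoinRoot.of (artinPoly h) 0 * root (artinPoly h) := by
      rw [r1, ← hval0, h1, Units.val_one]
    exact one_ne_zero (rep_unique_s19 this).2
  have hsq : ((u^2 : (AdjoinRoot (artinPoly h))ˣ) : AdjoinRoot (artinPoly h)) =
      AdjoinRoot.of (artinPoly h) (f+1) + AdjoinRoot.of (artinPoly h) 1 * root (artinPoly h) := by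
    have d1 : f*f + 1*1*h = f+1 := by linear_combination hf + f^2*two_R
    have d2 : f*1 + 1*f + 1*1 = 1 := by linear_combination f*two_R
    rw [pow_two, Units.val_mul, hval]
    calc (AdjoinRoot.of (artinPoly h) f + root (artinPoly h)) *
          (AdjoinRoot.of (artinPoly h) f + root (artinPoly h))
        = (AdjoinRoot.of (artinPoly h) f + AdjoinRoot.of (artinPoly h) 1 * root (artinPoly h)) *
          (AdjoinRoot.of (artinPoly h) f + AdjoinRoot.of (artinPoly h) 1 * root (artinPoly h)) := by
          rw [map_one, one_mul]
      _ = _ := by rw [mul_rep, d1, d2]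
  have hcube : u^3 = 1 := by
    apply Units.ext
    have : ((u^3 : (AdjoinRoot (artinPoly h))ˣ) : AdjoinRoot (artinPoly h)) =
        ((u^2 : (AdjoinRoot (artinPoly h))ˣ) : AdjoinRoot (artinPoly h)) * u := by
      rw [pow_succ, Units.val_mul]
    rw [this, hsq, hval]
    have e1 : (f+1)*f + 1*1*h = 1 := by linear_combination hf + (f^2+f)*two_R
    have e2 : (f+1)*1 + 1*f + 1*1 = 0 := by linear_combination (f+1)*two_R
    calc (AdjoinRoot.of (artinPoly h) (f+1) + AdjoinRoot.of (artinPoly h) 1 * root (artinPoly h)) *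
          (AdjoinRoot.of (artinPoly h) f + root (artinPoly h))
        = (AdjoinRoot.of (artinPoly h) (f+1) + AdjoinRoot.of (artinPoly h) 1 * root (artinPoly h)) *
          (AdjoinRoot.of (artinPoly h) f + AdjoinRoot.of (artinPoly h) 1 * root (artinPoly h)) := by
          rw [map_one, one_mul]
      _ = AdjoinRoot.of (artinPoly h) ((f+1)*f + 1*1*h) +
          AdjoinRoot.of (artinPoly h) ((f+1)*1 + 1*f + 1*1) * root (artinPoly h) := mul_rep _ _ _ _
      _ = 1 := by rw [e1, e2, map_one, map_zero, zero_mul, add_zero]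
  have horder : orderOf u = 3 := by
    haveI : Fact (Nat.Prime 3) := ⟨by norm_num⟩
    exact orderOf_eq_prime hcube hne
  refine ⟨u, hval, horder, ?_⟩
  intro v
  obtain ⟨a, b, hv⟩ := rep_exists (v : AdjoinRoot (artinPoly h))
  have hnorm := norm_one (v := v) hv
  rcases b_cases hnorm with hb | hb
  · have ha1 : a * a = 1 := by rw [hb] at hnorm; linear_combination hnorm
    have ha : a = 1 := unit_R_eq_one (IsUnit.of_mul_eq_one _ ha1)
    have : v = 1 := by
      apply Units.ext
      rw [hv, hb, ha, map_zero, zero_mul, add_zero, map_one]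
      rfl
    rw [this]; exact Subgroup.one_mem _
  · rw [hb] at hnorm
    have hprod : (a - f) * (a - f - 1) = 0 := by
      linear_combination hnorm - hf + (-(a*f) - a)*two_R
    rcases mul_eq_zero.mp hprod with h0 | h0
    · have ha : a = f := by linear_combination h0
      have : v = u := by
        apply Units.ext
        rw [hv, ha, hb, hval, map_one, one_mul]
      rw [this]; exact Subgroup.mem_zpowers u
    · have ha : a = f + 1 := by linear_combination h0
      have : v = u^2 := by
        apply Units.ext
        rw [hv, ha, hb, hsq]
      rw [this]
      exact pow_mem (Subgroup.mem_zpowers u) 2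

/-- The unit group of `F₂[x,y]/(y² + y + h)` is nontrivial iff `h = f² + f + 1` for some
`f`, in which case it is cyclic of order 3 generated by `f + y`. -/
theorem stmt_19 (h : Polynomial (ZMod 2)) :
    ((∃ u : (AdjoinRoot (artinPoly h))ˣ, u ≠ 1) ↔
      ∃ f : Polynomial (ZMod 2), h = f ^ 2 + f + 1) ∧
    (∀ f : Polynomial (ZMod 2), h = f ^ 2 + f + 1 →
      ∃ u : (AdjoinRoot (artinPoly h))ˣ,
        (u : AdjoinRoot (artinPoly h)) =
          AdjoinRoot.of (artinPoly h) f + AdjoinRoot.root (artinPoly h) ∧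
        orderOf u = 3 ∧
        ∀ v : (AdjoinRoot (artinPoly h))ˣ, v ∈ Subgroup.zpowers u) := by
  constructor
  · constructor
    · rintro ⟨v, hv1⟩
      obtain ⟨a, b, hv⟩ := rep_exists (v : AdjoinRoot (artinPoly h))
      have hnorm := norm_one (v := v) hv
      rcases b_cases hnorm with hb | hb
      · exfalso
        rw [hb] at hnorm
        have ha1 : a * a = 1 := by linear_combination hnorm
        have ha : a = 1 := unit_R_eq_one (IsUnit.of_mul_eq_one _ ha1)
        apply hv1
        apply Units.ext
        rw [hv, hb, ha, map_zero, zero_mul, add_zero, map_one, Units.val_one]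
      · rw [hb] at hnorm
        exact ⟨a, by linear_combination -hnorm + (h-1)*two_R⟩
    · rintro ⟨f, hf⟩
      obtain ⟨u, -, ho, -⟩ := main_aux f hf
      refine ⟨u, fun h1 => ?_⟩
      rw [h1, orderOf_one] at ho
      exact (by norm_num : (1:ℕ) ≠ 3) ho
  · intro f hf
    exact main_aux f hf
end
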